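/- arXiv:math/0412302 — 4 statements merged into one kernel-verified Lean document; each statement's English description precedes it below -/
import Mathlib

section
/- Let u, w ∈ W. Then there exists v₀ ∈ W with v₀ ≤ u such that, setting y' = v₀ w, one has ℓ(y') = ℓ(w) + ℓ(v₀) and y' ≥ v w for every v ∈ W with v ≤ u. In particular, the set {v w : v ∈ W, v ≤ u} contains a unique maximal element with respect to Bruhat order. -/
open CoxeterSystem

variable {B W : Type*} [Group W] {M : CoxeterMatrix B}

/-- The Bruhat order on `W`, via the subword property: `x ≤ y` iff some reduced word for `y`
has a sublist whose product is `x`. -/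
def CoxeterSystem.bruhatLE (cs : CoxeterSystem M W) (x y : W) : Prop :=
  ∃ ω : List B, cs.IsReduced ω ∧ cs.wordProd ω = y ∧
    ∃ ω' : List B, ω'.Sublist ω ∧ cs.wordProd ω' = x

/-- The standard parabolic subgroup `W_J` of `W`, generated by `{sⱼ : j ∈ J}`. -/
def CoxeterSystem.parab (cs : CoxeterSystem M W) (J : Set B) : Subgroup W :=
  Subgroup.closure (cs.simple '' J)

/-- `w ∈ W^J`: `w` has minimal length in the coset `w * W_J`. -/
def CoxeterSystem.IsMinRight (cs : CoxeterSystem M W) (J : Set B) (w : W) : Prop :=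
  ∀ u ∈ cs.parab J, cs.length w ≤ cs.length (w * u)

/-- `w ∈ ᴶW`: `w` has minimal length in the coset `W_J * w`. -/
def CoxeterSystem.IsMinLeft (cs : CoxeterSystem M W) (J : Set B) (w : W) : Prop :=
  ∀ u ∈ cs.parab J, cs.length w ≤ cs.length (u * w)

/-!
Induct on `ℓ(u)`. If `s = s_i` is a left descent of `u` and `v₁` is the element found for
`su`, take `v₀ w = s ⋆ (v₁ w) = max(v₁ w, s v₁ w)`. This works by the lifting property of the
Bruhat order: `[1, u] = [1, su] ∪ s[1, su]`, and `x ≤ y` implies `x, s x ≤ s ⋆ y`.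

Both facts need the subword property for every reduced word of `y`, not just one. It follows by
comparing subwords with the order generated by the steps `a < t a` (`t` a reflection), using the
strong exchange condition: a left inversion `t` of `π ω` occurs in the left inversion sequence of
`ω`. That holds because Tits' cocycle `η(w, t)`, the parity of the number of occurrences of `t` in
the left inversion sequence of a word for `w`, is independent of the word: `s_i ↦ (δ_{s_i}, s_i)`
respects the Coxeter relations in `(ℤ/2)^W ⋊ W`.
-/

namespace CoxeterSystem

variable (cs : CoxeterSystem M W)

local prefix:100 "s" => cs.simple
local prefix:100 "π" => cs.wordProd
local prefix:100 "ℓ" => cs.length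
local prefix:100 "lis" => cs.leftInvSeq

section Cocycle

open scoped Classical

def conjAct : W →* MulAut (W → Multiplicative (ZMod 2)) where
  toFun w := MulEquiv.arrowCongr (MulAut.conj w).toEquiv (MulEquiv.refl _)
  map_one' := by ext; simp; rfl
  map_mul' a b := by ext; simp [MulAut.mul_def, mul_assoc]

lemma conjAct_apply (w : W) (f : W → Multiplicative (ZMod 2)) (x : W) :
    conjAct w f x = f (w⁻¹ * x * w) := rfl

noncomputable def dirac (t : W) : W → Multiplicative (ZMod 2) :=
  Pi.mulSingle t (Multiplicative.ofAdd 1)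

lemma conjAct_dirac (w t : W) : conjAct w (dirac t) = dirac (w * t * w⁻¹) := by
  have h (x : W) : w⁻¹ * x * w = t ↔ x = w * t * w⁻¹ := by
    constructor <;> rintro rfl <;> group
  ext x
  simp only [conjAct_apply, dirac, Pi.mulSingle_apply, h]

noncomputable def gen (i : B) : (W → Multiplicative (ZMod 2)) ⋊[conjAct] W :=
  ⟨dirac (s i), s i⟩

lemma gen_mul_gen_pow (i i' : B) (k : ℕ) :
    (cs.gen i * cs.gen i') ^ k =
      ⟨∏ r ∈ Finset.range (2 * k), dirac ((s i * s i') ^ r * s i), (s i * s i') ^ k⟩ := by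
  set a := s i
  set c := s i * s i'
  have hac (n : ℕ) : a * (c ^ n)⁻¹ = c ^ n * a := by
    have : SemiconjBy a c⁻¹ c := by simp [SemiconjBy, c, a, mul_assoc]
    rw [← inv_pow, (this.pow_right n).eq]
  have h₁ (n : ℕ) : c ^ n * a * (c ^ n)⁻¹ = c ^ (2 * n) * a := by
    rw [mul_assoc, hac, ← mul_assoc, two_mul, pow_add]
  have h₂ (n : ℕ) : c ^ n * (a * s i' * a⁻¹) * (c ^ n)⁻¹ = c ^ (2 * n + 1) * a := by
    have : a * s i' * a⁻¹ = c * a := by simp [a, c]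
    rw [this, mul_assoc, mul_assoc, hac, ← mul_assoc, ← mul_assoc, ← pow_succ, ← pow_add]
    ring_nf
  induction k with
  | zero => ext <;> simp
  | succ k ih =>
    rw [pow_succ, ih]
    ext : 1
    · rw [SemidirectProduct.mul_left]
      show _ * conjAct (c ^ k) (dirac a * conjAct a (dirac (s i'))) = _
      rw [map_mul, conjAct_dirac, conjAct_dirac, conjAct_dirac, h₁, h₂, Nat.mul_succ,
        Finset.prod_range_succ, Finset.prod_range_succ, mul_assoc]
    · exact (pow_succ c k).symm

lemma gen_liftable : M.IsLiftable cs.gen := by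
  intro i i'
  have hsq (f : W → Multiplicative (ZMod 2)) : f * f = 1 :=
    funext fun _ => (by decide : ∀ z : Multiplicative (ZMod 2), z * z = 1) _
  -- the `2m` reflections `(s_i s_i')^r s_i` repeat with period `m`, so each occurs evenly often
  rw [gen_mul_gen_pow, cs.simple_mul_simple_pow, two_mul, Finset.prod_range_add]
  simp only [pow_add, cs.simple_mul_simple_pow, one_mul]
  rw [hsq]
  rfl

noncomputable def cocycleHom : W →* (W → Multiplicative (ZMod 2)) ⋊[conjAct] W :=
  cs.lift ⟨cs.gen, cs.gen_liftable⟩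

lemma right_cocycleHom (w : W) : (cs.cocycleHom w).right = w := by
  have : SemidirectProduct.rightHom.comp cs.cocycleHom = MonoidHom.id W :=
    cs.ext_simple fun i => by simp [cocycleHom, gen]
  exact DFunLike.congr_fun this w

/-- Tits' cocycle: `η(w, t)` is the parity of the number of occurrences of `t` in the left
inversion sequence of any word for `w`. -/
noncomputable def eta (w t : W) : ZMod 2 := Multiplicative.toAdd ((cs.cocycleHom w).left t)

lemma eta_one (t : W) : cs.eta 1 t = 0 := by simp [eta]

lemma eta_simple (i : B) (t : W) : cs.eta (s i) t = if t = s i then 1 else 0 := by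
  simp [eta, cocycleHom, gen, dirac, Pi.mulSingle_apply, apply_ite Multiplicative.toAdd]

lemma eta_mul (x y t : W) : cs.eta (x * y) t = cs.eta x t + cs.eta y (x⁻¹ * t * x) := by
  simp only [eta, map_mul, SemidirectProduct.mul_left, right_cocycleHom]
  rfl

lemma eta_self {t : W} (ht : cs.IsReflection t) : cs.eta t t = 1 := by
  obtain ⟨w, i, rfl⟩ := ht
  have hinv : cs.eta w⁻¹ (s i) = cs.eta w (w * s i * w⁻¹) := by
    have := cs.eta_mul w w⁻¹ (w * s i * w⁻¹)
    rw [mul_inv_cancel, eta_one, show w⁻¹ * (w * s i * w⁻¹) * w = s i by group] at this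
    exact (CharTwo.add_eq_zero.mp this.symm).symm
  rw [eta_mul, eta_mul, show w⁻¹ * (w * s i * w⁻¹) * w = s i by group,
    show (w * s i)⁻¹ * (w * s i * w⁻¹) * (w * s i) = s i by group, hinv, eta_simple, if_pos rfl,
    add_right_comm, CharTwo.add_self_eq_zero, zero_add]

lemma eta_wordProd_eq_zero {ω : List B} {t : W} (h : t ∉ lis ω) : cs.eta (π ω) t = 0 := by
  induction ω generalizing t with
  | nil => exact cs.eta_one t
  | cons i ω ih =>
    simp only [leftInvSeq, List.mem_cons, List.mem_map, not_or, not_exists, not_and] at h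
    rw [wordProd_cons, eta_mul, eta_simple, if_neg h.1, zero_add]
    refine ih fun hmem => h.2 _ hmem ?_
    simp [mul_assoc]

lemma isLeftInversion_of_eta_ne_zero {w t : W} (h : cs.eta w t ≠ 0) :
    cs.IsLeftInversion w t := by
  obtain ⟨ω, hω, rfl⟩ := cs.exists_isReduced w
  exact cs.isLeftInversion_of_mem_leftInvSeq hω (not_imp_comm.mp cs.eta_wordProd_eq_zero h)

lemma eta_ne_zero_of_isLeftInversion {w t : W} (h : cs.IsLeftInversion w t) :
    cs.eta w t ≠ 0 := by
  intro h₀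
  have : cs.eta (t * w) t ≠ 0 := by
    rw [eta_mul, eta_self cs h.1, show t⁻¹ * t * t = t by group, h₀]
    decide
  have hlt := (cs.isLeftInversion_of_eta_ne_zero this).2
  rw [← mul_assoc, h.1.mul_self, one_mul] at hlt
  exact lt_asymm h.2 hlt

end Cocycle

theorem mem_leftInvSeq_of_isLeftInversion {ω : List B} {t : W}
    (h : cs.IsLeftInversion (π ω) t) : t ∈ lis ω :=
  by_contra fun hω => cs.eta_ne_zero_of_isLeftInversion h (cs.eta_wordProd_eq_zero hω)

theorem exists_eraseIdx_of_isLeftInversion {ω : List B} {t : W}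
    (h : cs.IsLeftInversion (π ω) t) : ∃ j < ω.length, t * π ω = π (ω.eraseIdx j) := by
  obtain ⟨j, hj, rfl⟩ := List.mem_iff_getElem.mp (cs.mem_leftInvSeq_of_isLeftInversion h)
  rw [length_leftInvSeq] at hj
  exact ⟨j, hj, by rw [← List.getD_eq_getElem _ 1, getD_leftInvSeq_mul_wordProd]⟩

theorem isReduced_cons_iff {i : B} {ω : List B} :
    cs.IsReduced (i :: ω) ↔ cs.IsReduced ω ∧ ¬ cs.IsLeftDescent (π ω) i := by
  rw [not_isLeftDescent_iff]
  unfold IsReduced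
  rw [wordProd_cons, List.length_cons]
  have := cs.length_wordProd_le ω
  rcases cs.length_simple_mul (π ω) i with h | h <;> omega

theorem exists_isReduced_cons_of_isLeftDescent {u : W} {i : B} (hi : cs.IsLeftDescent u i) :
    ∃ σ, cs.IsReduced (i :: σ) ∧ π (i :: σ) = u := by
  obtain ⟨σ, hσ, hπ⟩ := cs.exists_isReduced (s i * u)
  refine ⟨σ, cs.isReduced_cons_iff.mpr ⟨hσ, ?_⟩, ?_⟩
  · rwa [← hπ, ← isLeftDescent_iff_not_isLeftDescent_mul]
  · rw [wordProd_cons, ← hπ, simple_mul_simple_cancel_left]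

theorem exists_isReduced_sublist (ω : List B) :
    ∃ ω' : List B, ω'.Sublist ω ∧ cs.IsReduced ω' ∧ π ω' = π ω := by
  induction ω with
  | nil => exact ⟨[], .slnil, by simp [IsReduced], rfl⟩
  | cons i α ih =>
    obtain ⟨α', hsub, hred, hπ⟩ := ih
    by_cases hi : cs.IsLeftDescent (π α') i
    · obtain ⟨j, hj, he⟩ := cs.exists_eraseIdx_of_isLeftInversion
        ((cs.isLeftInversion_simple_iff_isLeftDescent _ i).mpr hi)
      refine ⟨α'.eraseIdx j, ((α'.eraseIdx_sublist j).trans hsub).cons i, ?_, ?_⟩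
      · have := List.length_eraseIdx_add_one hj
        rw [isLeftDescent_iff, he] at hi
        unfold IsReduced at hred ⊢
        omega
      · rw [← he, hπ, wordProd_cons]
    · exact ⟨i :: α', hsub.cons_cons i, cs.isReduced_cons_iff.mpr ⟨hred, hi⟩, by
        rw [wordProd_cons, wordProd_cons, hπ]⟩

theorem isLeftInversion_mul_self {a t : W} (ht : cs.IsReflection t) (hlt : ℓ a < ℓ (t * a)) :
    cs.IsLeftInversion (t * a) t :=
  ⟨ht, by rwa [← mul_assoc, ht.mul_self, one_mul]⟩

def ReflectionStep (a b : W) : Prop := ∃ t, cs.IsReflection t ∧ b = t * a ∧ ℓ a < ℓ b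

def ReflectionLE : W → W → Prop := Relation.ReflTransGen cs.ReflectionStep

theorem reflectionStep_simple_mul {y : W} {i : B} (hi : ¬ cs.IsLeftDescent y i) :
    cs.ReflectionStep y (s i * y) :=
  ⟨s i, cs.isReflection_simple i, rfl, by rw [not_isLeftDescent_iff] at hi; omega⟩

theorem reflectionStep_of_isLeftDescent {y : W} {i : B} (hi : cs.IsLeftDescent y i) :
    cs.ReflectionStep (s i * y) y :=
  ⟨s i, cs.isReflection_simple i, (cs.simple_mul_simple_cancel_left i).symm, hi⟩

theorem reflectionLE_simple_mul_of_isLeftDescent {a t : W} {i : B} (ht : cs.IsReflection t)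
    (hlt : ℓ a < ℓ (t * a)) (hi : cs.IsLeftDescent (t * a) i) :
    cs.ReflectionLE (s i * a) (t * a) := by
  obtain ⟨σ, hσ, hπ⟩ := cs.exists_isReduced_cons_of_isLeftDescent hi
  obtain ⟨j, hj, he⟩ :=
    cs.exists_eraseIdx_of_isLeftInversion (hπ ▸ cs.isLeftInversion_mul_self ht hlt)
  rw [hπ, ← mul_assoc, ht.mul_self, one_mul] at he
  -- deleting the first letter of `i :: σ` gives `s_i a = t a`, any other `s_i a < s_i t a`
  cases j with
  | zero =>
    rw [List.eraseIdx_cons_zero] at he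
    have hsa : s i * a = t * a := by rw [← hπ, wordProd_cons, he]
    rw [hsa]
    exact .refl
  | succ k =>
    rw [List.eraseIdx_cons_succ, wordProd_cons] at he
    have hsa : s i * a = π (σ.eraseIdx k) := by rw [he, simple_mul_simple_cancel_left]
    have hsta : s i * (t * a) = π σ := by rw [← hπ, wordProd_cons, simple_mul_simple_cancel_left]
    have hk : k < σ.length := by simpa using hj
    have hstep : cs.ReflectionStep (s i * a) (s i * (t * a)) := by
      refine ⟨s i * t * (s i)⁻¹, ht.conj _, by group, ?_⟩
      rw [hsa, hsta, (cs.isReduced_cons_iff.mp hσ).1]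
      calc ℓ (π (σ.eraseIdx k)) ≤ (σ.eraseIdx k).length := cs.length_wordProd_le _
        _ < σ.length := by rw [← List.length_eraseIdx_add_one hk]; omega
    exact Relation.ReflTransGen.single hstep |>.tail (cs.reflectionStep_of_isLeftDescent hi)

theorem ReflectionStep.simple_mul {a b : W} (h : cs.ReflectionStep a b) (i : B) :
    cs.ReflectionLE (s i * a) b ∨ cs.ReflectionLE (s i * a) (s i * b) := by
  obtain ⟨t, ht, rfl, hlt⟩ := h
  by_cases hi : cs.IsLeftDescent (t * a) i
  · exact .inl (cs.reflectionLE_simple_mul_of_isLeftDescent ht hlt hi)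
  · refine .inr (.single ⟨s i * t * (s i)⁻¹, ht.conj _, by group, ?_⟩)
    rw [not_isLeftDescent_iff] at hi
    rcases cs.length_simple_mul a i with h | h <;> omega

theorem ReflectionLE.simple_mul_or {a b : W} (h : cs.ReflectionLE a b) (i : B) :
    cs.ReflectionLE (s i * a) b ∨ cs.ReflectionLE (s i * a) (s i * b) := by
  induction h with
  | refl => exact .inr .refl
  | tail _ hstep ih =>
    rcases ih with h | h
    · exact .inl (h.tail hstep)
    · exact (hstep.simple_mul cs i).imp h.trans h.trans

theorem ReflectionLE.simple_mul {a b : W} (h : cs.ReflectionLE a b) {i : B}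
    (hi : ¬ cs.IsLeftDescent b i) : cs.ReflectionLE (s i * a) (s i * b) :=
  (h.simple_mul_or cs i).elim (·.tail (cs.reflectionStep_simple_mul hi)) id

theorem reflectionLE_of_sublist {ω' ω : List B} (hsub : ω'.Sublist ω) (hω : cs.IsReduced ω) :
    cs.ReflectionLE (π ω') (π ω) := by
  induction hsub with
  | slnil => exact .refl
  | cons i _ ih =>
    obtain ⟨hred, hi⟩ := cs.isReduced_cons_iff.mp hω
    rw [wordProd_cons]
    exact (ih hred).tail (cs.reflectionStep_simple_mul hi)
  | cons_cons i _ ih =>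
    obtain ⟨hred, hi⟩ := cs.isReduced_cons_iff.mp hω
    rw [wordProd_cons, wordProd_cons]
    exact (ih hred).simple_mul cs hi

theorem ReflectionLE.exists_sublist {x y : W} (h : cs.ReflectionLE x y) {ω : List B}
    (hω : cs.IsReduced ω) (hπ : π ω = y) : ∃ ω', ω'.Sublist ω ∧ π ω' = x := by
  induction h generalizing ω with
  | refl => exact ⟨ω, .refl ω, hπ⟩
  | tail _ hstep ih =>
    obtain ⟨t, ht, rfl, hlt⟩ := hstep
    obtain ⟨j, -, he⟩ :=
      cs.exists_eraseIdx_of_isLeftInversion (hπ ▸ cs.isLeftInversion_mul_self ht hlt)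
    obtain ⟨σ, hsub, hσ, hπσ⟩ := cs.exists_isReduced_sublist (ω.eraseIdx j)
    obtain ⟨ω', hsub', rfl⟩ := ih hσ (by rw [hπσ, ← he, hπ, ← mul_assoc, ht.mul_self, one_mul])
    exact ⟨ω', hsub'.trans (hsub.trans (ω.eraseIdx_sublist j)), rfl⟩

theorem bruhatLE.exists_sublist {x y : W} (h : cs.bruhatLE x y) {ω : List B}
    (hω : cs.IsReduced ω) (hπ : π ω = y) : ∃ ω', ω'.Sublist ω ∧ π ω' = x := by
  obtain ⟨ω₀, hω₀, rfl, ω₀', hsub, rfl⟩ := h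
  exact (cs.reflectionLE_of_sublist hsub hω₀).exists_sublist cs hω hπ

theorem bruhatLE_refl (x : W) : cs.bruhatLE x x := by
  obtain ⟨ω, hω, rfl⟩ := cs.exists_isReduced x
  exact ⟨ω, hω, rfl, ω, .refl ω, rfl⟩

theorem length_le_of_bruhatLE {x y : W} (h : cs.bruhatLE x y) : ℓ x ≤ ℓ y := by
  obtain ⟨ω, hω, rfl, ω', hsub, rfl⟩ := h
  exact (cs.length_wordProd_le ω').trans (hω ▸ hsub.length_le)

theorem bruhatLE_antisymm {x y : W} (h₁ : cs.bruhatLE x y) (h₂ : cs.bruhatLE y x) : x = y := by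
  have hlen := cs.length_le_of_bruhatLE h₂
  obtain ⟨ω, hω, rfl, ω', hsub, rfl⟩ := h₁
  have := cs.length_wordProd_le ω'
  rw [hsub.eq_of_length (by have := hsub.length_le; unfold IsReduced at hω; omega)]

theorem eq_one_of_bruhatLE_one {x : W} (h : cs.bruhatLE x 1) : x = 1 :=
  cs.length_eq_zero_iff.mp (Nat.le_zero.mp (length_one cs ▸ cs.length_le_of_bruhatLE h))

theorem bruhatLE_simple_mul_of_not_isLeftDescent {x y : W} {i : B} (h : cs.bruhatLE x y)
    (hi : ¬ cs.IsLeftDescent y i) :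
    cs.bruhatLE x (s i * y) ∧ cs.bruhatLE (s i * x) (s i * y) := by
  obtain ⟨ω, hω, rfl, ω', hsub, rfl⟩ := h
  have hω' := cs.isReduced_cons_iff.mpr ⟨hω, hi⟩
  exact ⟨⟨i :: ω, hω', wordProd_cons .., ω', hsub.cons i, rfl⟩,
    ⟨i :: ω, hω', wordProd_cons .., i :: ω', hsub.cons_cons i, wordProd_cons ..⟩⟩

theorem simple_mul_bruhatLE_of_isLeftDescent {x y : W} {i : B} (h : cs.bruhatLE x y)
    (hi : cs.IsLeftDescent y i) : cs.bruhatLE (s i * x) y := by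
  obtain ⟨σ, hσ, hπ⟩ := cs.exists_isReduced_cons_of_isLeftDescent hi
  refine ⟨i :: σ, hσ, hπ, ?_⟩
  obtain ⟨ω', hsub, rfl⟩ := h.exists_sublist cs hσ hπ
  cases hsub with
  | cons _ hsub => exact ⟨i :: ω', hsub.cons_cons i, wordProd_cons ..⟩
  | cons_cons _ hsub =>
    exact ⟨_, hsub.cons i, by rw [wordProd_cons, simple_mul_simple_cancel_left]⟩

theorem bruhatLE_or_simple_mul_bruhatLE {x u : W} {i : B} (h : cs.bruhatLE x u)
    (hi : cs.IsLeftDescent u i) :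
    cs.bruhatLE x (s i * u) ∨ cs.bruhatLE (s i * x) (s i * u) := by
  obtain ⟨σ, hσ, hπ⟩ := cs.exists_isReduced_cons_of_isLeftDescent hi
  have hπσ : π σ = s i * u := by rw [← hπ, wordProd_cons, simple_mul_simple_cancel_left]
  have hσ' := (cs.isReduced_cons_iff.mp hσ).1
  obtain ⟨ω', hsub, rfl⟩ := h.exists_sublist cs hσ hπ
  cases hsub with
  | cons _ hsub => exact .inl ⟨σ, hσ', hπσ, ω', hsub, rfl⟩
  | cons_cons _ hsub =>
    exact .inr ⟨σ, hσ', hπσ, _, hsub, by rw [wordProd_cons, simple_mul_simple_cancel_left]⟩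

/-- The Demazure product `s_i ⋆ y = max(y, s_i y)`. -/
noncomputable def demazure (i : B) (y : W) : W := by
  classical exact if cs.IsLeftDescent y i then y else s i * y

theorem bruhatLE_demazure {x y : W} (h : cs.bruhatLE x y) (i : B) :
    cs.bruhatLE x (cs.demazure i y) ∧ cs.bruhatLE (s i * x) (cs.demazure i y) := by
  by_cases hi : cs.IsLeftDescent y i
  · simp only [demazure, hi, if_true]
    exact ⟨h, cs.simple_mul_bruhatLE_of_isLeftDescent h hi⟩
  · simp only [demazure, hi, if_false]
    exact cs.bruhatLE_simple_mul_of_not_isLeftDescent h hi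

theorem demazure_simple_mul {u : W} {i : B} (hi : cs.IsLeftDescent u i) :
    cs.demazure i (s i * u) = u := by
  rw [isLeftDescent_iff_not_isLeftDescent_mul] at hi
  simp [demazure, hi]

theorem length_simple_mul_mul_of_not_isLeftDescent {v w : W} {i : B}
    (hvw : ℓ (v * w) = ℓ w + ℓ v) (hi : ¬ cs.IsLeftDescent (v * w) i) :
    ℓ (s i * v * w) = ℓ w + ℓ (s i * v) := by
  rw [not_isLeftDescent_iff, ← mul_assoc] at hi
  have := cs.length_mul_le (s i * v) w
  rcases cs.length_simple_mul v i with h | h <;> omega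

theorem exists_max_mul_of_bruhatLE (u w : W) : ∃ v₀, cs.bruhatLE v₀ u ∧
    ℓ (v₀ * w) = ℓ w + ℓ v₀ ∧ ∀ v, cs.bruhatLE v u → cs.bruhatLE (v * w) (v₀ * w) := by
  rcases eq_or_ne u 1 with rfl | hu
  · refine ⟨1, cs.bruhatLE_refl 1, by simp, fun v hv => ?_⟩
    rw [cs.eq_one_of_bruhatLE_one hv]
    exact cs.bruhatLE_refl _
  obtain ⟨i, hi⟩ := cs.exists_leftDescent_of_ne_one hu
  obtain ⟨v₁, hv₁, hlen, hmax⟩ := exists_max_mul_of_bruhatLE (s i * u) w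
  have hv₁u := demazure_simple_mul cs hi ▸ cs.bruhatLE_demazure hv₁ i
  have hmax' (v : W) (hv : cs.bruhatLE v u) :
      cs.bruhatLE (v * w) (cs.demazure i (v₁ * w)) := by
    rcases cs.bruhatLE_or_simple_mul_bruhatLE hv hi with h | h
    · exact (cs.bruhatLE_demazure (hmax v h) i).1
    · simpa [mul_assoc] using (cs.bruhatLE_demazure (hmax _ h) i).2
  by_cases hd : cs.IsLeftDescent (v₁ * w) i
  · simp only [demazure, hd, if_true] at hmax'
    exact ⟨v₁, hv₁u.1, hlen, hmax'⟩
  · simp only [demazure, hd, if_false, ← mul_assoc] at hmax'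
    exact ⟨s i * v₁, hv₁u.2, cs.length_simple_mul_mul_of_not_isLeftDescent hlen hd, hmax'⟩
termination_by cs.length u
decreasing_by exact hi

end CoxeterSystem

/-- For `u, w ∈ W` there is `v₀ ≤ u` such that `y' = v₀ w` satisfies `ℓ(y') = ℓ(w) + ℓ(v₀)`
and `y' ≥ v w` for all `v ≤ u`; in particular `{v w : v ≤ u}` has a unique maximal element. -/
theorem max_of_bruhat_interval_mul (cs : CoxeterSystem M W) (u w : W) :
    ∃ v₀ : W, cs.bruhatLE v₀ u ∧
      cs.length (v₀ * w) = cs.length w + cs.length v₀ ∧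
      (∀ v : W, cs.bruhatLE v u → cs.bruhatLE (v * w) (v₀ * w)) ∧
      (∀ y : W, (∃ v : W, cs.bruhatLE v u ∧ y = v * w) →
        (∀ v : W, cs.bruhatLE v u → cs.bruhatLE (v * w) y) → y = v₀ * w) := by
  obtain ⟨v₀, hv₀, hlen, hmax⟩ := cs.exists_max_mul_of_bruhatLE u w
  refine ⟨v₀, hv₀, hlen, hmax, ?_⟩
  rintro y ⟨v, hv, rfl⟩ hy
  exact cs.bruhatLE_antisymm (hmax v hv) (hy v₀ hv₀)
end

section
/- Let J ⊆ I, u ∈ W, w ∈ W^J and v ∈ W_J. Suppose u w v = w' v' with w' ∈ W^J and v' ∈ W_J, and that ℓ(u w v) = ℓ(w v) − ℓ(u). Then w' ≤ w in Bruhat order. If moreover w' = w, then for every i ∈ supp(u) there exists j ∈ J with w⁻¹ s_i w = s_j. -/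
open CoxeterSystem

variable {B W : Type*} [Group W] {M : CoxeterMatrix B}

/-- `supp(u)`: the set of indices of simple reflections occurring in some (equivalently,
any) reduced expression of `u`. -/
def CoxeterSystem.supp (cs : CoxeterSystem M W) (u : W) : Set B :=
  {i | ∃ ω : List B, cs.IsReduced ω ∧ cs.wordProd ω = u ∧ i ∈ ω}

/-!
Multiply `w * v` on the left by the letters of a reduced word of `u`, starting from the end of the
word. The length hypothesis forces every step to shorten the product, which stays of the form
`w₂ * v₂` with `w₂ ∈ W^J`, `v₂ ∈ W_J` and `w₂` a right factor of `w`
(`ℓ (w * w₂⁻¹) + ℓ w₂ = ℓ w`). A letter `sᵢ` either shortens `w₂`, and then `sᵢ * w₂` is again in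
`W^J`, or, by Deodhar's lemma, `sᵢ * w₂ = w₂ * sⱼ` with `j ∈ J` and only `v₂` moves. So `w'` is a
right factor of `w`, hence `w' ≤ w`, and if `w' = w` only the second case occurs, which gives the
conjugation statement.

Deodhar's lemma and `ℓ (w * v) = ℓ w + ℓ v` for `w ∈ W^J`, `v ∈ W_J` rest on the exchange
condition. It comes from Tits' action of `W` on pairs (reflection, sign), which shows that the
parity of the number of occurrences of a reflection in the left inversion sequence of a word only
depends on the product of the word.
-/

namespace CoxeterSystem

theorem prod_map_alternatingWord_two_mul {G : Type*} [Monoid G] (f : B → G) (i j : B)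
    (m : ℕ) : ((alternatingWord i j (2 * m)).map f).prod = (f i * f j) ^ m := by
  induction m with
  | zero => simp [alternatingWord]
  | succ m ih =>
    rw [(by ring : 2 * (m + 1) = 2 * m + 1 + 1), alternatingWord_succ', alternatingWord_succ']
    simp [ih, pow_succ', mul_assoc, parity_simps]

variable (cs : CoxeterSystem M W)

local prefix:100 "s " => cs.simple
local prefix:100 "π " => cs.wordProd
local prefix:100 "ℓ " => cs.length
local prefix:100 "lis " => cs.leftInvSeq

theorem wordProd_alternatingWord_add_two_mul (i j : B) (n : ℕ) :
    π (alternatingWord i j (n + 2 * M i j)) = π (alternatingWord i j n) := by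
  simp only [prod_alternatingWord_eq_mul_pow, Nat.even_add, even_two_mul, iff_true,
    (by omega : (n + 2 * M i j) / 2 = n / 2 + M i j), pow_add, simple_mul_simple_pow, mul_one]

theorem leftInvSeq_alternatingWord_take_eq_drop (i j : B) :
    (lis (alternatingWord i j (2 * M i j))).take (M i j)
      = (lis (alternatingWord i j (2 * M i j))).drop (M i j) := by
  refine List.ext_getElem (by simp; omega) fun k hk _ => ?_
  have hk : k < M i j := (by simpa using hk : _ ∧ _).1
  rw [List.getElem_take, List.getElem_drop,
    getElem_leftInvSeq_alternatingWord _ _ _ _ _ (by omega),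
    getElem_leftInvSeq_alternatingWord _ _ _ _ _ (by omega),
    (by rw [M.symmetric]; ring : 2 * (M i j + k) + 1 = 2 * k + 1 + 2 * M j i),
    wordProd_alternatingWord_add_two_mul]

section ParityAction

variable [DecidableEq W]

def parityAction (i : B) : Function.End (W × ZMod 2) :=
  fun x => (s i * x.1 * s i, x.2 + if x.1 = s i then 1 else 0)

theorem prod_map_parityAction_apply (ω : List B) (t : W) (e : ZMod 2) :
    (ω.map cs.parityAction).prod (t, e)
      = (π ω * t * (π ω)⁻¹, e + (lis ω).count (π ω * t * (π ω)⁻¹)) := by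
  induction ω with
  | nil => simp; rfl
  | cons i ω ih =>
    change cs.parityAction i ((ω.map cs.parityAction).prod (t, e)) = _
    rw [ih]
    set x := π ω * t * (π ω)⁻¹
    have hconj : π (i :: ω) * t * (π (i :: ω))⁻¹ = MulAut.conj (s i) x := by
      simp only [x, wordProd_cons, MulAut.conj_apply, mul_inv_rev, inv_simple, mul_assoc]
    have hself : s i * x * s i = s i ↔ x = s i := by
      refine ⟨fun h => ?_, fun h => by simp [h]⟩
      calc x = s i * (s i * x * s i) * s i := by simp [mul_assoc]
        _ = s i := by simp [h]
    rw [hconj, leftInvSeq, List.count_cons,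
      List.count_map_of_injective _ _ (MulAut.conj (s i)).injective]
    simp only [parityAction, MulAut.conj_apply, inv_simple, beq_iff_eq, eq_comm (a := s i), hself]
    push_cast [add_assoc]
    rfl

theorem isLiftable_parityAction : M.IsLiftable cs.parityAction := by
  intro i j
  rw [← prod_map_alternatingWord_two_mul]
  funext ⟨t, e⟩
  have hπ : π (alternatingWord i j (2 * M i j)) = 1 := by
    simpa [alternatingWord] using cs.wordProd_alternatingWord_add_two_mul i j 0
  have heven : ((lis (alternatingWord i j (2 * M i j))).count t : ZMod 2) = 0 := by
    rw [← List.take_append_drop (M i j) (lis (alternatingWord i j (2 * M i j))),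
      List.count_append, cs.leftInvSeq_alternatingWord_take_eq_drop, ← two_mul, Nat.cast_mul]
    simp [show (2 : ZMod 2) = 0 from rfl]
  rw [prod_map_parityAction_apply, hπ]
  simp [heven]
  rfl

theorem count_leftInvSeq_modEq_of_wordProd_eq {ω ω' : List B} (h : π ω = π ω') (t : W) :
    (lis ω).count t ≡ (lis ω').count t [MOD 2] := by
  set ρ := cs.lift ⟨cs.parityAction, cs.isLiftable_parityAction⟩
  have hρ (ω : List B) : ρ (π ω) = (ω.map cs.parityAction).prod := by
    simp [ρ, wordProd, map_list_prod, Function.comp_def]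
  have := congrArg (fun f : Function.End (W × ZMod 2) => (f ((π ω)⁻¹ * t * π ω, 0)).2)
    ((hρ ω).symm.trans ((congrArg ρ h).trans (hρ ω')))
  rw [← ZMod.natCast_eq_natCast_iff]
  simpa [prod_map_parityAction_apply, h, mul_assoc] using this

end ParityAction

theorem exists_eraseIdx_of_length_mul_simple_lt {ω : List B} {j : B}
    (h : ℓ (π ω * s j) < ℓ (π ω)) : ∃ k < ω.length, π ω * s j = π (ω.eraseIdx k) := by
  classical
  obtain ⟨τ, hτ, hτω⟩ := cs.exists_isReduced (π ω * s j)
  -- `x * π ω = π ω * s j`; `x` occurs exactly once in the left inversion sequence of `τ ++ [j]`,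
  -- hence an odd number of times in that of `ω`.
  set x := π ω * s j * (π ω)⁻¹
  have hτj : π (τ.concat j) = π ω := by
    rw [wordProd_concat, ← hτω, simple_mul_simple_cancel_right]
  have hx : π τ * s j * (π τ)⁻¹ = x := by
    simp [← hτω, x, mul_assoc]
  have hxτ : x ∉ lis τ := fun hmem => by
    have := (cs.isLeftInversion_of_mem_leftInvSeq hτ hmem).2
    rw [← hτω, (by simp [x] : x * (π ω * s j) = π ω)] at this
    omega
  have hodd : (lis ω).count x ≡ 1 [MOD 2] := by
    refine (cs.count_leftInvSeq_modEq_of_wordProd_eq hτj x).symm.trans ?_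
    rw [leftInvSeq_concat, hx, List.concat_eq_append, List.count_append,
      List.count_eq_zero_of_not_mem hxτ]
    simp [Nat.ModEq]
  have hmem : x ∈ lis ω := by
    by_contra hnot
    simp [Nat.ModEq, List.count_eq_zero_of_not_mem hnot] at hodd
  obtain ⟨k, hk, hxk⟩ := List.mem_iff_getElem.mp hmem
  refine ⟨k, by simpa using hk, ?_⟩
  rw [← getD_leftInvSeq_mul_wordProd, List.getD_eq_getElem _ _ hk, hxk]
  simp [x]

section Parabolic

variable {J : Set B}

theorem mem_parab_iff_exists_word {v : W} :
    v ∈ cs.parab J ↔ ∃ τ : List B, (∀ i ∈ τ, i ∈ J) ∧ π τ = v := by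
  constructor
  · intro hv
    induction hv using Subgroup.closure_induction with
    | mem x hx =>
      obtain ⟨j, hj, rfl⟩ := hx
      exact ⟨[j], by simpa using hj, cs.wordProd_singleton j⟩
    | one => exact ⟨[], by simp, cs.wordProd_nil⟩
    | mul x y _ _ hx hy =>
      obtain ⟨α, hα, rfl⟩ := hx
      obtain ⟨β, hβ, rfl⟩ := hy
      exact ⟨α ++ β, fun i hi => (List.mem_append.mp hi).elim (hα i) (hβ i),
        cs.wordProd_append α β⟩
    | inv x _ hx =>
      obtain ⟨α, hα, rfl⟩ := hx
      exact ⟨α.reverse, by simpa using hα, cs.wordProd_reverse α⟩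
  · rintro ⟨τ, hτ, rfl⟩
    induction τ with
    | nil => exact one_mem _
    | cons i τ ih =>
      rw [wordProd_cons]
      exact mul_mem (Subgroup.subset_closure ⟨i, hτ i (by simp), rfl⟩)
        (ih fun k hk => hτ k (by simp [hk]))

theorem simple_mem_parab {j : B} (hj : j ∈ J) : s j ∈ cs.parab J :=
  Subgroup.subset_closure ⟨j, hj, rfl⟩

/-- Minimal only among words in the letters of `J`; that such a word is reduced in `W` is a
consequence (`length_mul_wordProd_of_isReducedIn` with `w = 1`). -/
def IsReducedIn (J : Set B) (τ : List B) : Prop :=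
  (∀ i ∈ τ, i ∈ J) ∧ ∀ τ' : List B, (∀ i ∈ τ', i ∈ J) → π τ' = π τ → τ.length ≤ τ'.length

theorem exists_isReducedIn_of_mem_parab {v : W} (hv : v ∈ cs.parab J) :
    ∃ τ, cs.IsReducedIn J τ ∧ π τ = v := by
  obtain ⟨τ, hτ, hτv⟩ := cs.mem_parab_iff_exists_word.mp hv
  obtain ⟨τ₀, ⟨hτ₀, hτ₀v⟩, hmin⟩ := (measure List.length).wf.has_min
    {τ' | (∀ i ∈ τ', i ∈ J) ∧ π τ' = v} ⟨τ, hτ, hτv⟩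
  exact ⟨τ₀, ⟨hτ₀, fun τ' hτ' h => not_lt.mp (hmin τ' ⟨hτ', h.trans hτ₀v⟩)⟩, hτ₀v⟩

variable {cs} in
theorem IsReducedIn.of_append {α β : List B} (h : cs.IsReducedIn J (α ++ β)) :
    cs.IsReducedIn J α := by
  refine ⟨fun i hi => h.1 i (List.mem_append_left β hi), fun α' hα' hπ => ?_⟩
  have := h.2 (α' ++ β)
    (fun i hi => (List.mem_append.mp hi).elim (hα' i) (h.1 i <| List.mem_append_right α ·))
    (by simp [wordProd_append, hπ])
  simpa using this

theorem length_mul_wordProd_of_isReducedIn {w : W} (hw : cs.IsMinRight J w) {τ : List B}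
    (hτ : cs.IsReducedIn J τ) : ℓ (w * π τ) = ℓ w + τ.length := by
  induction τ using List.reverseRecOn with
  | nil => simp
  | append_singleton τ j ih =>
    have hτj := ih hτ.of_append
    have hj : j ∈ J := hτ.1 j (by simp)
    rw [wordProd_append, wordProd_singleton, ← mul_assoc, List.length_append,
      List.length_singleton, ← add_assoc, ← hτj]
    refine (cs.length_mul_simple (w * π τ) j).resolve_right fun hlt => ?_
    obtain ⟨σ, hσ, rfl⟩ := cs.exists_isReduced w
    rw [← wordProd_append] at hlt
    obtain ⟨k, hk, hdel⟩ := cs.exists_eraseIdx_of_length_mul_simple_lt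
      (by omega : ℓ (π (σ ++ τ) * s j) < _)
    -- Deleting a letter of `σ` would shorten `w` within `w * W_J`; deleting one of `τ` would
    -- give a shorter word in the letters of `J` for `π τ * s j`.
    rcases lt_or_ge k σ.length with hkσ | hkσ
    · rw [List.eraseIdx_append_of_lt_length hkσ, wordProd_append, wordProd_append] at hdel
      have hτJ : π τ ∈ cs.parab J :=
        cs.mem_parab_iff_exists_word.mpr ⟨τ, fun i hi => hτ.1 i (by simp [hi]), rfl⟩
      have hmin := hw _ (mul_mem (mul_mem hτJ (cs.simple_mem_parab hj)) (inv_mem hτJ))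
      rw [(by rw [← mul_assoc, ← mul_assoc, hdel]; group :
        π σ * (π τ * s j * (π τ)⁻¹) = π (σ.eraseIdx k))] at hmin
      have := cs.length_wordProd_le (σ.eraseIdx k)
      rw [List.length_eraseIdx_of_lt hkσ] at this
      have := hσ.eq
      omega
    · rw [List.eraseIdx_append_of_length_le hkσ, wordProd_append, wordProd_append, mul_assoc]
        at hdel
      have hshort := hτ.2 (τ.eraseIdx (k - σ.length))
        (fun i hi => hτ.1 i (by simp [List.mem_of_mem_eraseIdx hi]))
        (by rw [← mul_left_cancel hdel, wordProd_append, wordProd_singleton])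
      simp only [List.length_append] at hk hshort
      rw [List.length_eraseIdx_of_lt (by omega)] at hshort
      omega

theorem isMinRight_one (J : Set B) : cs.IsMinRight J 1 := by
  simp [IsMinRight]

theorem length_mul_of_isMinRight {w v : W} (hw : cs.IsMinRight J w) (hv : v ∈ cs.parab J) :
    ℓ (w * v) = ℓ w + ℓ v := by
  obtain ⟨τ, hτ, rfl⟩ := cs.exists_isReducedIn_of_mem_parab hv
  have hτ₁ := cs.length_mul_wordProd_of_isReducedIn (cs.isMinRight_one J) hτ
  rw [one_mul, length_one, zero_add] at hτ₁
  rw [cs.length_mul_wordProd_of_isReducedIn hw hτ, hτ₁]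

theorem eq_of_isMinRight_of_inv_mul_mem {w w' : W} (hw : cs.IsMinRight J w)
    (hw' : cs.IsMinRight J w') (h : w⁻¹ * w' ∈ cs.parab J) : w = w' := by
  have h₁ := cs.length_mul_of_isMinRight hw h
  have h₂ := cs.length_mul_of_isMinRight hw' (inv_mem h)
  rw [mul_inv_cancel_left] at h₁
  rw [length_inv, mul_inv_rev, inv_inv, mul_inv_cancel_left] at h₂
  rw [← inv_mul_eq_one, ← cs.length_eq_zero_iff]
  omega

theorem isMinRight_simple_mul {w : W} (hw : cs.IsMinRight J w) {i : B} (h : ℓ (s i * w) < ℓ w) :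
    cs.IsMinRight J (s i * w) := by
  intro u hu
  have := cs.length_mul_of_isMinRight hw hu
  have := cs.length_simple_mul w i
  have := cs.length_simple_mul (w * u) i
  rw [mul_assoc]
  omega

/-- Deodhar's lemma. -/
theorem exists_simple_mul_eq_mul_simple {w : W} (hw : cs.IsMinRight J w) {i : B}
    (hi : ℓ w < ℓ (s i * w)) (hnot : ¬ cs.IsMinRight J (s i * w)) :
    ∃ j ∈ J, s i * w = w * s j := by
  simp only [IsMinRight, not_forall, not_le] at hnot
  obtain ⟨u, hu, hlt⟩ := hnot
  obtain ⟨τ, hτ, rfl⟩ := cs.exists_isReducedIn_of_mem_parab hu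
  have hwτ := cs.length_mul_wordProd_of_isReducedIn hw hτ
  have hlen := cs.length_simple_mul w i
  have hlen' := cs.length_simple_mul (w * π τ) i
  rw [← mul_assoc] at hlen'
  obtain ⟨j, hj, rfl⟩ : ∃ j ∈ J, τ = [j] := by
    match τ, hτ with
    | [], _ => simp at hlt
    | [j], hτ => exact ⟨j, hτ.1 j (by simp), rfl⟩
    | _ :: _ :: _, _ => simp at hwτ; omega
  refine ⟨j, hj, ?_⟩
  obtain ⟨σ, hσ, rfl⟩ := cs.exists_isReduced w
  rw [wordProd_singleton, ← wordProd_cons] at hlt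
  obtain ⟨k, hk, hdel⟩ := cs.exists_eraseIdx_of_length_mul_simple_lt hlt
  rw [wordProd_cons] at hdel
  cases k with
  | zero =>
    rw [← cs.simple_mul_simple_cancel_right (w := s i * π σ) j, hdel]
    rfl
  | succ k =>
    have hshort : π σ * s j = π (σ.eraseIdx k) := by
      simpa [wordProd_cons, mul_assoc] using hdel
    have hkσ : k < σ.length := by simpa using hk
    have := cs.length_wordProd_le (σ.eraseIdx k)
    rw [List.length_eraseIdx_of_lt hkσ, ← hshort] at this
    have := hw (s j) (cs.simple_mem_parab hj)
    have := hσ.eq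
    omega

theorem exists_decomp_of_length_wordProd_mul_add {w v : W} (hw : cs.IsMinRight J w)
    (hv : v ∈ cs.parab J) (ω : List B) (hlen : ℓ (π ω * w * v) + ω.length = ℓ (w * v)) :
    ∃ w₂, cs.IsMinRight J w₂ ∧ ∃ v₂ ∈ cs.parab J, π ω * w * v = w₂ * v₂ ∧
      ℓ (w * w₂⁻¹) + ℓ w₂ = ℓ w ∧ (w₂ = w → ∀ i ∈ ω, ∃ j ∈ J, w⁻¹ * s i * w = s j) := by
  induction ω with
  | nil => exact ⟨w, hw, v, hv, by simp, by simp, by simp⟩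
  | cons i ω ih =>
    have hcons : π (i :: ω) * w * v = s i * (π ω * w * v) := by rw [wordProd_cons]; group
    have hlower := cs.length_le_length_mul_add_left (π ω) (w * v)
    have hword := cs.length_wordProd_le ω
    have hstep := cs.length_simple_mul (π ω * w * v) i
    rw [hcons, List.length_cons] at hlen
    rw [← mul_assoc] at hlower
    obtain ⟨w₂, hw₂, v₂, hv₂, hdec, hsuf, hconj⟩ := ih (by omega)
    rw [hdec] at hlower
    rw [hdec, ← mul_assoc] at hstep hlen
    have hw₂v₂ := cs.length_mul_of_isMinRight hw₂ hv₂
    rw [hcons, hdec]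
    rcases cs.length_simple_mul w₂ i with hup | hdown
    · have hnot : ¬ cs.IsMinRight J (s i * w₂) := fun hmin => by
        have := cs.length_mul_of_isMinRight hmin hv₂
        omega
      obtain ⟨j, hj, hij⟩ := cs.exists_simple_mul_eq_mul_simple hw₂ (by omega) hnot
      refine ⟨w₂, hw₂, s j * v₂, mul_mem (cs.simple_mem_parab hj) hv₂, ?_, hsuf, ?_⟩
      · rw [← mul_assoc, hij, mul_assoc]
      · rintro rfl k hk
        rcases List.mem_cons.mp hk with rfl | hk
        · exact ⟨j, hj, by rw [mul_assoc, hij, inv_mul_cancel_left]⟩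
        · exact hconj rfl k hk
    · refine ⟨s i * w₂, cs.isMinRight_simple_mul hw₂ (by omega), v₂, hv₂,
        (mul_assoc _ _ _).symm, ?_, fun h => ?_⟩
      · have hle := cs.length_mul_le (w * w₂⁻¹) (s i)
        have hge := cs.length_mul_le (w * (s i * w₂)⁻¹) (s i * w₂)
        rw [inv_mul_cancel_right] at hge
        rw [mul_inv_rev, inv_simple, ← mul_assoc] at hge ⊢
        rw [length_simple] at hle
        omega
      · rw [h] at hdown
        omega

end Parabolic

theorem bruhatLE_of_length_mul_inv_add {x y : W} (h : ℓ (y * x⁻¹) + ℓ x = ℓ y) :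
    cs.bruhatLE x y := by
  obtain ⟨α, hα, hαπ⟩ := cs.exists_isReduced (y * x⁻¹)
  obtain ⟨σ, hσ, rfl⟩ := cs.exists_isReduced x
  have hy : π (α ++ σ) = y := by rw [wordProd_append, ← hαπ, inv_mul_cancel_right]
  refine ⟨α ++ σ, ?_, hy, σ, List.sublist_append_right α σ, rfl⟩
  rw [IsReduced, hy, List.length_append, ← hα.eq, ← hσ.eq, ← hαπ, h]

end CoxeterSystem

/-- Lemma 5.8: let `J ⊆ I`, `u ∈ W`, `w ∈ W^J`, `v ∈ W_J`, and suppose `u w v = w' v'`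
with `w' ∈ W^J`, `v' ∈ W_J` and `ℓ(u w v) = ℓ(w v) - ℓ(u)`. Then `w' ≤ w`; if moreover
`w' = w`, then every `i ∈ supp(u)` satisfies `w⁻¹ sᵢ w = sⱼ` for some `j ∈ J`. -/
theorem le_of_length_sub_decomp (cs : CoxeterSystem M W) (J : Set B) (u w v w' v' : W)
    (hw : cs.IsMinRight J w) (hv : v ∈ cs.parab J)
    (hw' : cs.IsMinRight J w') (hv' : v' ∈ cs.parab J)
    (hdec : u * w * v = w' * v')
    (hlen : cs.length (u * w * v) + cs.length u = cs.length (w * v)) :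
    cs.bruhatLE w' w ∧
      (w' = w → ∀ i ∈ cs.supp u, ∃ j ∈ J, w⁻¹ * cs.simple i * w = cs.simple j) := by
  have key (ω : List B) (hω : cs.IsReduced ω) (hωu : cs.wordProd ω = u) :
      cs.length (w * w'⁻¹) + cs.length w' = cs.length w ∧
        (w' = w → ∀ i ∈ ω, ∃ j ∈ J, w⁻¹ * cs.simple i * w = cs.simple j) := by
    subst hωu
    obtain ⟨w₂, hw₂, v₂, hv₂, hdec₂, hsuf, hconj⟩ :=
      cs.exists_decomp_of_length_wordProd_mul_add hw hv ω (by rwa [← hω.eq])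
    have hcoset : w₂⁻¹ * w' = v₂ * v'⁻¹ := by
      rw [inv_mul_eq_iff_eq_mul, ← mul_assoc, ← hdec₂, hdec, mul_inv_cancel_right]
    obtain rfl : w₂ = w' :=
      cs.eq_of_isMinRight_of_inv_mul_mem hw₂ hw' (hcoset ▸ mul_mem hv₂ (inv_mem hv'))
    exact ⟨hsuf, hconj⟩
  obtain ⟨ω, hω, hωu⟩ := cs.exists_isReduced u
  exact ⟨cs.bruhatLE_of_length_mul_inv_add (key ω hω hωu.symm).1,
    fun hw'w i ⟨ω, hω, hωu, hi⟩ => (key ω hω hωu).2 hw'w i hi⟩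
end

section
/- Let J ⊆ I, w ∈ W^{δ(J)} and u ∈ W_J. Then ℓ(u⁻¹ w δ(u)) ≥ ℓ(w). -/
/-!
Since `δ(u)` lies in `W_{δ(J)}` and has the same length as `u`, minimality of `w` in its coset
gives `ℓ(w δ(u)) = ℓ(w) + ℓ(u)`, and the triangle inequality
`ℓ(w δ(u)) ≤ ℓ(u) + ℓ(u⁻¹ w δ(u))` yields the claim.

Additivity `ℓ(w v) = ℓ(w) + ℓ(v)` for `w ∈ W^K`, `v ∈ W_K` follows by induction on `v` from the
deletion condition. That in turn comes from Tits' sign representation of `W` on `W × {±1}`: the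
parity of the number of occurrences of `t` in the right inversion sequence of a word depends only
on the product of the word.
-/

open CoxeterSystem

variable {B W : Type*} [Group W] {M : CoxeterMatrix B}

section Involutions

variable {G : Type*} [Group G]

theorem mul_mul_inv_eq_iff_eq_inv_mul_mul (c t y : G) : c * t * c⁻¹ = y ↔ t = c⁻¹ * y * c := by
  constructor
  · rintro rfl; group
  · rintro rfl; group

theorem mul_mul_eq_self_iff_eq_inv (s t : G) : s * t * s = s ↔ t = s⁻¹ := by
  rw [mul_eq_right, mul_eq_one_iff_inv_eq, eq_comm]

variable {a b : G}

theorem inv_mul_mul_pow_mul_mul_eq_pow_add_two_mul (ha : a⁻¹ = a) (hb : b⁻¹ = b) (n : ℕ) :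
    (a * b)⁻¹ * ((b * a) ^ n * b) * (a * b) = (b * a) ^ (n + 2) * b := by
  rw [mul_inv_rev, ha, hb, pow_succ, pow_succ']; group

end Involutions

namespace CoxeterSystem

variable (cs : CoxeterSystem M W)

section SignRepresentation

variable [DecidableEq W]

noncomputable def signPerm (i : B) : Equiv.Perm (W × ℤˣ) :=
  Function.Involutive.toPerm
    (fun p => (cs.simple i * p.1 * cs.simple i, p.2 * if p.1 = cs.simple i then -1 else 1))
    (by
      rintro ⟨t, ε⟩
      dsimp only
      simp only [mul_mul_eq_self_iff_eq_inv, inv_simple]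
      simp only [mul_assoc, simple_mul_simple_self, mul_one, simple_mul_simple_cancel_left]
      split_ifs <;> simp)

theorem signPerm_apply (i : B) (t : W) (ε : ℤˣ) :
    cs.signPerm i (t, ε) =
      (cs.simple i * t * cs.simple i, ε * if t = cs.simple i then -1 else 1) := rfl

theorem signPerm_mul_signPerm_pow_apply (i i' : B) (k : ℕ) (t : W) (ε : ℤˣ) :
    ((cs.signPerm i * cs.signPerm i') ^ k) (t, ε) =
      ((cs.simple i * cs.simple i') ^ k * t * ((cs.simple i * cs.simple i') ^ k)⁻¹,
        ε * ∏ j ∈ Finset.range (2 * k),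
          if t = (cs.simple i' * cs.simple i) ^ j * cs.simple i' then -1 else 1) := by
  induction k generalizing t ε with
  | zero => simp
  | succ k ih =>
    have ha := cs.inv_simple i
    have hb := cs.inv_simple i'
    have hconj : cs.simple i * (cs.simple i' * t * cs.simple i') * cs.simple i =
        (cs.simple i * cs.simple i') * t * (cs.simple i * cs.simple i')⁻¹ := by
      rw [mul_inv_rev, ha, hb]; group
    have hfirst : cs.simple i' * t * cs.simple i' = cs.simple i ↔
        t = (cs.simple i' * cs.simple i) ^ 1 * cs.simple i' := by
      nth_rw 2 [← hb]
      rw [mul_mul_inv_eq_iff_eq_inv_mul_mul, hb, pow_one]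
    rw [pow_succ, Equiv.Perm.mul_apply, Equiv.Perm.mul_apply, signPerm_apply, signPerm_apply, ih,
      hconj]
    simp only [mul_mul_inv_eq_iff_eq_inv_mul_mul, inv_mul_mul_pow_mul_mul_eq_pow_add_two_mul ha hb, hfirst]
    refine Prod.ext ?_ ?_
    · generalize cs.simple i * cs.simple i' = c
      group
    · rw [show 2 * (k + 1) = 2 * k + 1 + 1 by ring, Finset.prod_range_succ',
        Finset.prod_range_succ', pow_zero, one_mul]
      simp only [mul_assoc, mul_comm, mul_left_comm]

/-- Among the `2 * M i i'` signs, each dihedral reflection `(s i' * s i) ^ j * s i'` is tested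
twice, since `(s i' * s i) ^ M i i' = 1`. -/
theorem isLiftable_signPerm : M.IsLiftable cs.signPerm := by
  intro i i'
  ext ⟨t, ε⟩ : 1
  rw [signPerm_mul_signPerm_pow_apply, simple_mul_simple_pow, two_mul, Finset.prod_range_add]
  simp only [pow_add, simple_mul_simple_pow', one_mul, inv_one, mul_one, Int.units_mul_self]
  rfl

noncomputable def signRep : W →* Equiv.Perm (W × ℤˣ) :=
  cs.lift ⟨cs.signPerm, cs.isLiftable_signPerm⟩

theorem signRep_wordProd (ω : List B) (t : W) (ε : ℤˣ) :
    cs.signRep (cs.wordProd ω) (t, ε) =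
      (cs.wordProd ω * t * (cs.wordProd ω)⁻¹, ε * (-1) ^ (cs.rightInvSeq ω).count t) := by
  induction ω with
  | nil => simp
  | cons i ω ih =>
    rw [wordProd_cons, map_mul, Equiv.Perm.mul_apply, ih, signRep, lift_apply_simple,
      signPerm_apply, rightInvSeq, List.count_cons]
    simp only [mul_mul_inv_eq_iff_eq_inv_mul_mul]
    refine Prod.ext (by simp only [mul_inv_rev, inv_simple, mul_assoc]) ?_
    simp only [beq_iff_eq, eq_comm (a := t), pow_add]
    split_ifs <;> simp

theorem neg_one_pow_count_rightInvSeq_eq {ω ω' : List B} (h : cs.wordProd ω = cs.wordProd ω')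
    (t : W) : (-1 : ℤˣ) ^ (cs.rightInvSeq ω).count t = (-1) ^ (cs.rightInvSeq ω').count t := by
  have hω := cs.signRep_wordProd ω t 1
  rw [h, cs.signRep_wordProd ω' t 1] at hω
  simpa using (congrArg Prod.snd hω).symm

end SignRepresentation

theorem simple_mem_rightInvSeq_of_isRightDescent {ω : List B} {i : B}
    (h : cs.IsRightDescent (cs.wordProd ω) i) : cs.simple i ∈ cs.rightInvSeq ω := by
  classical
  -- A reduced word for `π ω * s i` followed by `i` is a word for `π ω` whose right inversion
  -- sequence contains `s i` exactly once; parity transfers this to `ω`.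
  obtain ⟨α, hα, hαω⟩ := cs.exists_isReduced (cs.wordProd ω * cs.simple i)
  have hword : cs.wordProd (α.concat i) = cs.wordProd ω := by
    rw [wordProd_concat, ← hαω, simple_mul_simple_cancel_right]
  have hα_count : (cs.rightInvSeq α).count (cs.simple i) = 0 := by
    refine List.count_eq_zero.mpr fun hmem => ?_
    have := (cs.isRightInversion_of_mem_rightInvSeq hα hmem).2
    rw [← hαω, simple_mul_simple_cancel_right] at this
    exact lt_asymm this h
  have hcount : (cs.rightInvSeq (α.concat i)).count (cs.simple i) = 1 := by
    have hmap := List.count_map_of_injective (cs.rightInvSeq α) _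
      (MulAut.conj (cs.simple i)).injective (cs.simple i)
    rw [MulAut.conj_apply, inv_simple, simple_mul_simple_cancel_right] at hmap
    rw [rightInvSeq_concat, List.concat_eq_append, List.count_append, List.count_singleton_self,
      hmap, hα_count]
  refine List.count_pos_iff.mp (Nat.pos_of_ne_zero fun hzero => ?_)
  have hsign := cs.neg_one_pow_count_rightInvSeq_eq hword (cs.simple i)
  rw [hcount, hzero] at hsign
  exact absurd hsign (by decide)

theorem exists_eraseIdx_of_isRightDescent {ω : List B} {i : B}
    (h : cs.IsRightDescent (cs.wordProd ω) i) :
    ∃ j < ω.length, cs.wordProd (ω.eraseIdx j) = cs.wordProd ω * cs.simple i := by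
  obtain ⟨j, hj, hget⟩ := List.getElem_of_mem (cs.simple_mem_rightInvSeq_of_isRightDescent h)
  rw [length_rightInvSeq] at hj
  refine ⟨j, hj, ?_⟩
  rw [← wordProd_mul_getD_rightInvSeq, List.getD_eq_getElem _ _ (by simpa using hj), hget]

theorem exists_length_lt_mul_eq_or_isRightDescent {w v : W} {i : B}
    (h : cs.IsRightDescent (w * v) i) :
    (∃ w', cs.length w' < cs.length w ∧ w' * v = w * v * cs.simple i) ∨
      cs.IsRightDescent v i := by
  obtain ⟨α, hα, rfl⟩ := cs.exists_isReduced w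
  obtain ⟨β, hβ, rfl⟩ := cs.exists_isReduced v
  rw [← wordProd_append] at h
  obtain ⟨j, hj, hjω⟩ := cs.exists_eraseIdx_of_isRightDescent h
  rw [wordProd_append] at hjω
  rw [List.length_append] at hj
  rcases lt_or_ge j α.length with hjα | hjα
  · rw [List.eraseIdx_append_of_lt_length hjα, wordProd_append] at hjω
    refine Or.inl ⟨_, ?_, hjω⟩
    calc cs.length (cs.wordProd (α.eraseIdx j)) ≤ (α.eraseIdx j).length :=
          cs.length_wordProd_le _
      _ < α.length := by rw [List.length_eraseIdx_of_lt hjα]; omega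
      _ = _ := hα.symm
  · rw [List.eraseIdx_append_of_length_le hjα, wordProd_append, mul_assoc] at hjω
    refine Or.inr ?_
    rw [IsRightDescent, ← mul_left_cancel hjω, hβ]
    calc _ ≤ (β.eraseIdx (j - α.length)).length := cs.length_wordProd_le _
      _ < β.length := by
        rw [List.length_eraseIdx_of_lt (by omega)]; omega

variable {cs} in
theorem IsMinRight.isRightDescent_of_isRightDescent_mul {K : Set B} {w v : W}
    (hw : cs.IsMinRight K w) (hv : v ∈ cs.parab K) {i : B} (hi : i ∈ K)
    (h : cs.IsRightDescent (w * v) i) : cs.IsRightDescent v i := by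
  refine (cs.exists_length_lt_mul_eq_or_isRightDescent h).resolve_left ?_
  rintro ⟨w', hw'w, hw'⟩
  have hconj : v * cs.simple i * v⁻¹ ∈ cs.parab K :=
    mul_mem (mul_mem hv (Subgroup.subset_closure ⟨i, hi, rfl⟩)) (inv_mem hv)
  have hw'eq : w' = w * (v * cs.simple i * v⁻¹) := by
    rw [eq_mul_inv_of_mul_eq hw']; group
  exact absurd (hw _ hconj) (by rw [← hw'eq]; omega)

variable {cs} in
theorem IsMinRight.length_mul_mul_simple {K : Set B} {w v : W} (hw : cs.IsMinRight K w)
    (hv : v ∈ cs.parab K) {i : B} (hi : i ∈ K)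
    (hwv : cs.length (w * v) = cs.length w + cs.length v) :
    cs.length (w * (v * cs.simple i)) = cs.length w + cs.length (v * cs.simple i) := by
  have hdesc := hw.isRightDescent_of_isRightDescent_mul hv hi
  have hle : cs.length (w * v * cs.simple i) ≤ cs.length w + cs.length (v * cs.simple i) :=
    mul_assoc w v _ ▸ cs.length_mul_le _ _
  rw [← mul_assoc]
  rcases cs.length_mul_simple v i with hvi | hvi <;>
    rcases cs.length_mul_simple (w * v) i with hwvi | hwvi <;>
    simp only [IsRightDescent] at hdesc <;> omega

variable {cs} in
theorem IsMinRight.length_mul {K : Set B} {w v : W} (hw : cs.IsMinRight K w)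
    (hv : v ∈ cs.parab K) : cs.length (w * v) = cs.length w + cs.length v := by
  induction hv using Subgroup.closure_induction_right with
  | one => simp
  | mul_right v hv _ hs ih =>
    obtain ⟨i, hi, rfl⟩ := hs
    exact hw.length_mul_mul_simple hv hi ih
  | mul_inv_cancel v hv _ hs ih =>
    obtain ⟨i, hi, rfl⟩ := hs
    rw [inv_simple]
    exact hw.length_mul_mul_simple hv hi ih

theorem map_wordProd {B' W' : Type*} [Group W'] {M' : CoxeterMatrix B'}
    (cs' : CoxeterSystem M' W') (f : W →* W') (σ : B → B')
    (hf : ∀ i, f (cs.simple i) = cs'.simple (σ i)) (ω : List B) :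
    f (cs.wordProd ω) = cs'.wordProd (ω.map σ) := by
  induction ω with
  | nil => simp
  | cons i ω ih => rw [wordProd_cons, map_mul, hf, ih, List.map_cons, wordProd_cons]

theorem length_map_le {B' W' : Type*} [Group W'] {M' : CoxeterMatrix B'}
    (cs' : CoxeterSystem M' W') (f : W →* W') (σ : B → B')
    (hf : ∀ i, f (cs.simple i) = cs'.simple (σ i)) (w : W) :
    cs'.length (f w) ≤ cs.length w := by
  obtain ⟨ω, hω, rfl⟩ := cs.exists_isReduced w
  rw [cs.map_wordProd cs' f σ hf, hω]
  exact (cs'.length_wordProd_le _).trans (List.length_map σ).le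

theorem map_mem_parab {B' W' : Type*} [Group W'] {M' : CoxeterMatrix B'}
    (cs' : CoxeterSystem M' W') (f : W →* W') (σ : B → B')
    (hf : ∀ i, f (cs.simple i) = cs'.simple (σ i)) {J : Set B} {u : W} (hu : u ∈ cs.parab J) :
    f u ∈ cs'.parab (σ '' J) := by
  have himage : f '' (cs.simple '' J) = cs'.simple '' (σ '' J) := by
    simp only [Set.image_image, hf]
  rw [parab, ← himage, ← MonoidHom.map_closure]
  exact Subgroup.mem_map_of_mem f hu

end CoxeterSystem

/-- For `w ∈ W^{δ(J)}` and `u ∈ W_J`, we have `ℓ(u⁻¹ w δ(u)) ≥ ℓ(w)`. -/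
theorem length_conj_ge (cs : CoxeterSystem M W) (π : B ≃ B) (d : W ≃* W)
    (hd : ∀ i : B, d (cs.simple i) = cs.simple (π i))
    (J : Set B) (w : W) (hw : cs.IsMinRight (π '' J) w) (u : W) (hu : u ∈ cs.parab J) :
    cs.length w ≤ cs.length (u⁻¹ * w * d u) := by
  have hd_symm (i : B) : d.symm (cs.simple i) = cs.simple (π.symm i) :=
    d.symm_apply_eq.mpr (by rw [hd, π.apply_symm_apply])
  have hdu : d u ∈ cs.parab (π '' J) := cs.map_mem_parab cs d.toMonoidHom π hd hu
  have hlen : cs.length u ≤ cs.length (d u) := by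
    simpa using cs.length_map_le cs d.symm.toMonoidHom π.symm hd_symm (d u)
  have hadd := hw.length_mul hdu
  have htri := cs.length_mul_le u (u⁻¹ * w * d u)
  rw [show u * (u⁻¹ * w * d u) = w * d u by group] at htri
  omega
end

section
/- Let J ⊆ I and u ∈ W, and set I₂ = I_2(J,u,δ). Then for every v ∈ W_{δ(I₂)} one has I_2(J, u v, δ) = I₂. -/
open CoxeterSystem

variable {B W : Type*} [Group W] {M : CoxeterMatrix B}

/-- The set of reflections of `W` lying in the standard parabolic subgroup `W_K`;
this is in canonical bijection with (the positive half of) the root subsystem `Φ_K`. -/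
def CoxeterSystem.reflSet (cs : CoxeterSystem M W) (K : Set B) : Set W :=
  {t | cs.IsReflection t ∧ t ∈ cs.parab K}

/-- `I₁(J, w, δ)`: the largest subset `K ⊆ J` with `w ∈ W^{δ(K)}` (the family of such `K`
is closed under unions, so the largest one is their union). -/
def CoxeterSystem.I1 (cs : CoxeterSystem M W) (π : B ≃ B) (J : Set B) (w : W) : Set B :=
  ⋃₀ {K | K ⊆ J ∧ cs.IsMinRight (π '' K) w}

/-- `I₂(J, w, δ)`: the largest subset `K ⊆ J` with `w(Φ_{δ(K)}) = Φ_K` (the family of such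
`K` is closed under unions, so the largest one is their union). The condition
`w(Φ_{δ(K)}) = Φ_K` is expressed equivalently as: conjugation by `w` maps the set of
reflections in `W_{δ(K)}` onto the set of reflections in `W_K`. -/
def CoxeterSystem.I2 (cs : CoxeterSystem M W) (π : B ≃ B) (J : Set B) (w : W) : Set B :=
  ⋃₀ {K | K ⊆ J ∧ (fun t => w * t * w⁻¹) '' cs.reflSet (π '' K) = cs.reflSet K}

/-! Since `W_K` is generated by the reflections it contains, the condition defining `I₂(J, w, δ)`
says `w W_{δ(K)} w⁻¹ = W_K`. This form is stable under unions, so `I₂ = I₂(J, u, δ)` satisfies it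
itself, and as `v ∈ W_{δ(I₂)}` normalises `W_{δ(I₂)}`, so does `I₂` for `u v`: hence
`I₂ ⊆ I₂(J, u v, δ)`. Applying this to `u v` and `v⁻¹ ∈ W_{δ(I₂(J, u v, δ))}` gives the reverse
inclusion. -/

open scoped Pointwise

namespace CoxeterSystem

variable (cs : CoxeterSystem M W)

theorem parab_mono {K L : Set B} (h : K ⊆ L) : cs.parab K ≤ cs.parab L :=
  Subgroup.closure_mono (Set.image_mono h)

theorem parab_iUnion {ι : Sort*} (K : ι → Set B) :
    cs.parab (⋃ i, K i) = ⨆ i, cs.parab (K i) := by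
  rw [parab, Set.image_iUnion, Subgroup.closure_iUnion]
  rfl

theorem parab_eq_closure_reflSet (K : Set B) :
    cs.parab K = Subgroup.closure (cs.reflSet K) := by
  refine le_antisymm (Subgroup.closure_le _ |>.2 ?_) (Subgroup.closure_le _ |>.2 fun t ht => ht.2)
  rintro _ ⟨i, hi, rfl⟩
  exact Subgroup.subset_closure ⟨cs.isReflection_simple i, Subgroup.subset_closure ⟨i, hi, rfl⟩⟩

theorem image_conj_reflSet (w : W) (K : Set B) :
    (fun t => w * t * w⁻¹) '' cs.reflSet K =
      {t | cs.IsReflection t ∧ t ∈ MulAut.conj w • cs.parab K} := by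
  ext t
  constructor
  · rintro ⟨s, ⟨hs, hsK⟩, rfl⟩
    exact ⟨hs.conj w, Subgroup.smul_mem_pointwise_smul s _ _ hsK⟩
  · rintro ⟨ht, s, hsK, rfl⟩
    refine ⟨s, ⟨?_, hsK⟩, rfl⟩
    simpa [mul_assoc] using ht.conj w⁻¹

theorem image_conj_reflSet_eq_iff (w : W) (K L : Set B) :
    (fun t => w * t * w⁻¹) '' cs.reflSet K = cs.reflSet L ↔
      MulAut.conj w • cs.parab K = cs.parab L := by
  refine ⟨fun h => ?_, fun h => by rw [image_conj_reflSet, h]; rfl⟩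
  rw [parab_eq_closure_reflSet, parab_eq_closure_reflSet, Subgroup.smul_closure, ← h]
  rfl

variable (π : B ≃ B) (J : Set B)

theorem I2_subset (w : W) : cs.I2 π J w ⊆ J :=
  Set.sUnion_subset fun _ hK => hK.1

theorem subset_I2 {w : W} {K : Set B} (hKJ : K ⊆ J)
    (hK : MulAut.conj w • cs.parab (π '' K) = cs.parab K) : K ⊆ cs.I2 π J w :=
  Set.subset_sUnion_of_mem ⟨hKJ, (cs.image_conj_reflSet_eq_iff w _ _).2 hK⟩

theorem conj_smul_parab_I2 (w : W) :
    MulAut.conj w • cs.parab (π '' cs.I2 π J w) = cs.parab (cs.I2 π J w) := by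
  rw [I2, Set.sUnion_eq_iUnion, Set.image_iUnion, parab_iUnion, parab_iUnion]
  exact (Subgroup.map_iSup _ _).trans
    (iSup_congr fun K => (cs.image_conj_reflSet_eq_iff w _ _).1 K.2.2)

theorem I2_subset_I2_mul {u v : W} (hv : v ∈ cs.parab (π '' cs.I2 π J u)) :
    cs.I2 π J u ⊆ cs.I2 π J (u * v) := by
  refine cs.subset_I2 π J (cs.I2_subset π J u) ?_
  rw [map_mul, mul_smul, Subgroup.conj_smul_eq_self_of_mem hv, conj_smul_parab_I2]

end CoxeterSystem

theorem I2_mul_eq_general (cs : CoxeterSystem M W) (π : B ≃ B)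
    (J : Set B) (u : W) :
    ∀ v ∈ cs.parab (π '' cs.I2 π J u), cs.I2 π J (u * v) = cs.I2 π J u := by
  intro v hv
  have hle := cs.I2_subset_I2_mul π J hv
  have hv' : v⁻¹ ∈ cs.parab (π '' cs.I2 π J (u * v)) :=
    inv_mem (cs.parab_mono (Set.image_mono hle) hv)
  have hge : cs.I2 π J (u * v) ⊆ cs.I2 π J u := by
    simpa using cs.I2_subset_I2_mul π J hv'
  exact hge.antisymm hle

/-- (proof of 5.5) For `J ⊆ I`, `u ∈ W` and `I₂ = I₂(J,u,δ)`, every `v ∈ W_{δ(I₂)}`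
satisfies `I₂(J, u v, δ) = I₂`. -/
theorem I2_mul_eq [Finite B] [Finite W] (cs : CoxeterSystem M W) (π : B ≃ B)
    (d : W ≃* W) (hd : ∀ i : B, d (cs.simple i) = cs.simple (π i))
    (J : Set B) (u : W) :
    ∀ v ∈ cs.parab (π '' cs.I2 π J u), cs.I2 π J (u * v) = cs.I2 π J u :=
  I2_mul_eq_general cs π J u
end
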